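/- Let v_1, …, v_{r+1} be nonzero vectors in ℝ^r such that every r-element subset of {v_1,…,v_{r+1}} is linearly independent, and suppose the cones generated by all r-element subsets of {v_1,…,v_{r+1}} together cover ℝ^r with pairwise disjoint interiors. If q_1, …, q_{r+1} are real numbers, not all zero, with ∑_{i=1}^{r+1} q_i v_i = 0, then all the q_i have the same sign; in particular, after replacing (q_i) by (−q_i) if necessary, all q_i are positive. -/

import Mathlib

/-!
No `q j` vanishes, since the other `r` vectors are linearly independent. If `q a > 0 > q b`, take
`x = ∑ c i • v i` with `c a = 0`, `c b = -q b` and every other `c i > max 0 (-q i)`: it lies in the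
interior of the cone avoiding `v a`, while `x = ∑ (c i + q i) • v i` exhibits it in the interior of
the cone avoiding `v b`, so these two maximal cones overlap.
-/

open Module

section FacetCone

variable {ι E : Type*} [Fintype ι] [DecidableEq ι]

def facetCone [AddCommMonoid E] [Module ℝ E] (v : ι → E) (j : ι) : Set E :=
  {x | ∃ c : ι → ℝ, (∀ i, 0 ≤ c i) ∧ c j = 0 ∧ x = ∑ i, c i • v i}

theorem sum_subtype_ne_eq_sum_of_eq_zero {R M : Type*} [Semiring R] [AddCommMonoid M] [Module R M]
    (v : ι → M) {c : ι → R} {j : ι} (hj : c j = 0) :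
    ∑ i : {i // i ≠ j}, c i • v i = ∑ i, c i • v i := by
  rw [Fintype.sum_eq_add_sum_subtype_ne _ j, hj, zero_smul, zero_add]

theorem apply_ne_zero_of_linearIndependent_subtype_ne {R M : Type*} [Ring R] [AddCommGroup M]
    [Module R M] {v : ι → M} {c : ι → R} (j : ι)
    (hli : LinearIndependent R fun i : {i // i ≠ j} => v i) (hrel : ∑ i, c i • v i = 0)
    (hc : c ≠ 0) : c j ≠ 0 := by
  intro hj
  have hsub := Fintype.linearIndependent_iff.mp hli (fun i : {i // i ≠ j} => c i)
    ((sum_subtype_ne_eq_sum_of_eq_zero v hj).trans hrel)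
  exact hc <| funext fun i => if h : i = j then h ▸ hj else hsub ⟨i, h⟩

variable [NormedAddCommGroup E] [NormedSpace ℝ E] [FiniteDimensional ℝ E]

theorem Module.Basis.isOpen_setOf_forall_repr_pos {κ : Type*} [Finite κ] (b : Basis κ ℝ E) :
    IsOpen {x | ∀ i, 0 < b.repr x i} := by
  rw [Set.ofPred_forall]
  exact isOpen_iInter_of_finite fun i =>
    isOpen_lt continuous_const (b.coord i).continuous_of_finiteDimensional

theorem sum_smul_mem_interior_facetCone {v : ι → E} {j : ι}
    (hli : LinearIndependent ℝ fun i : {i // i ≠ j} => v i)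
    (hcard : Fintype.card ι = finrank ℝ E + 1) {c : ι → ℝ} (hj : c j = 0)
    (hpos : ∀ i, i ≠ j → 0 < c i) :
    ∑ i, c i • v i ∈ interior (facetCone v j) := by
  have hcard' : Fintype.card {i // i ≠ j} = finrank ℝ E := by
    simp [Fintype.card_subtype_compl, hcard]
  let B := Basis.mk hli (hli.span_eq_top_of_card_eq_finrank' hcard').ge
  have hB : ∀ d : {i // i ≠ j} → ℝ, ∑ i, d i • B i = ∑ i, d i • v i := fun d => by
    simp only [B, Basis.mk_apply]
  refine mem_interior.mpr ⟨{x | ∀ i, 0 < B.repr x i}, ?_, B.isOpen_setOf_forall_repr_pos, ?_⟩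
  · intro x hx
    refine ⟨fun i => if h : i = j then 0 else B.repr x ⟨i, h⟩, fun i => ?_, dif_pos rfl, ?_⟩
    · dsimp only
      split_ifs with h
      exacts [le_rfl, (hx _).le]
    · rw [← sum_subtype_ne_eq_sum_of_eq_zero v (dif_pos rfl), ← hB]
      exact (B.sum_repr x).symm.trans (Finset.sum_congr rfl fun i _ => by rw [dif_neg i.2])
  · intro i
    rw [← sum_subtype_ne_eq_sum_of_eq_zero v hj, ← hB, B.repr_sum_self]
    exact hpos i i.2

theorem interior_facetCone_inter_nonempty {v : ι → E}
    (hli : ∀ j : ι, LinearIndependent ℝ fun i : {i // i ≠ j} => v i)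
    (hcard : Fintype.card ι = finrank ℝ E + 1) {q : ι → ℝ} (hrel : ∑ i, q i • v i = 0)
    {a b : ι} (ha : 0 < q a) (hb : q b < 0) :
    (interior (facetCone v a) ∩ interior (facetCone v b)).Nonempty := by
  have hab : a ≠ b := by rintro rfl; linarith
  let c : ι → ℝ := fun i => if i = a then 0 else if i = b then -q b else |q i| + 1
  have hshift : ∑ i, (c i + q i) • v i = ∑ i, c i • v i := by
    simp only [add_smul, Finset.sum_add_distrib, hrel, add_zero]
  refine ⟨∑ i, c i • v i, sum_smul_mem_interior_facetCone (hli a) hcard (if_pos rfl) ?_,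
    hshift ▸ sum_smul_mem_interior_facetCone (hli b) hcard ?_ ?_⟩
  · intro i hi
    by_cases hib : i = b
    · simp [c, hib, hab.symm, hb]
    · simp only [c, hi, hib, if_false]
      positivity
  · simp [c, hab.symm]
  · intro i hib
    by_cases hia : i = a
    · simp [c, hia, ha]
    · simp only [c, hia, hib, if_false]
      linarith [neg_abs_le (q i)]

end FacetCone

theorem stmt6_general (r : ℕ) (v : Fin (r + 1) → EuclideanSpace ℝ (Fin r))
    (hli : ∀ j : Fin (r + 1),
      LinearIndependent ℝ (fun i : {i : Fin (r + 1) // i ≠ j} => v i))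
    (cone : Fin (r + 1) → Set (EuclideanSpace ℝ (Fin r)))
    (hcone : ∀ j, cone j =
      {x | ∃ c : Fin (r + 1) → ℝ, (∀ i, 0 ≤ c i) ∧ c j = 0 ∧ x = ∑ i, c i • v i})
    (hdisj : ∀ j j', j ≠ j' → interior (cone j) ∩ interior (cone j') = ∅)
    (q : Fin (r + 1) → ℝ) (hq : q ≠ 0) (hrel : ∑ i, q i • v i = 0) :
    (∀ i, 0 < q i) ∨ (∀ i, q i < 0) := by
  obtain rfl : cone = facetCone v := funext hcone
  have hcard : Fintype.card (Fin (r + 1)) = finrank ℝ (EuclideanSpace ℝ (Fin r)) + 1 := by simp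
  have hq0 : ∀ i, q i ≠ 0 := fun i => apply_ne_zero_of_linearIndependent_subtype_ne i (hli i) hrel hq
  by_contra hsign
  push Not at hsign
  obtain ⟨⟨b, hb⟩, a, ha⟩ := hsign
  have hab : a ≠ b := by rintro rfl; exact hq0 a (le_antisymm hb ha)
  exact (interior_facetCone_inter_nonempty hli hcard hrel (ha.lt_of_ne (hq0 a).symm)
    (hb.lt_of_ne (hq0 b))).ne_empty (hdisj a b hab)

/-- If `v 1, …, v (r+1)` are nonzero vectors in `ℝ^r`, every `r`-element subset of them is
linearly independent, and the cones generated by the `r`-element subsets cover `ℝ^r` with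
pairwise disjoint interiors, then any nontrivial linear relation `∑ q i • v i = 0` has all
coefficients of the same sign. -/
theorem stmt6 (r : ℕ) (hr : 1 ≤ r) (v : Fin (r + 1) → EuclideanSpace ℝ (Fin r))
    (hv : ∀ i, v i ≠ 0)
    (hli : ∀ j : Fin (r + 1),
      LinearIndependent ℝ (fun i : {i : Fin (r + 1) // i ≠ j} => v i))
    (cone : Fin (r + 1) → Set (EuclideanSpace ℝ (Fin r)))
    (hcone : ∀ j, cone j =
      {x | ∃ c : Fin (r + 1) → ℝ, (∀ i, 0 ≤ c i) ∧ c j = 0 ∧ x = ∑ i, c i • v i})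
    (hcover : (⋃ j, cone j) = Set.univ)
    (hdisj : ∀ j j', j ≠ j' → interior (cone j) ∩ interior (cone j') = ∅)
    (q : Fin (r + 1) → ℝ) (hq : q ≠ 0) (hrel : ∑ i, q i • v i = 0) :
    (∀ i, 0 < q i) ∨ (∀ i, q i < 0) :=
  stmt6_general r v hli cone hcone hdisj q hq hrel
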